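/- arXiv:1811.12804 — 3 statements merged into one kernel-verified Lean document; each statement's English description precedes it below -/
import Mathlib

section
/- Let A be a diagonalizable real n×n matrix with eigen-decomposition A = V Λ V⁻¹ where V is invertible and Λ is diagonal. For any matrix H and any eigenvalue λ̃ of A + H, there exists an eigenvalue λ of A such that |λ - λ̃| ≤ ‖V‖ ‖V⁻¹‖ ‖H‖, where ‖·‖ denotes the operator (spectral) norm. -/
open Matrix

/-!
If `(A + H) x = λ̃ x` with `x ≠ 0`, then `y = V⁻¹ x` satisfies `(λ̃ - Λ) y = V⁻¹ H V y`. The left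
side has norm at least `minᵢ |λ̃ - λᵢ| ‖y‖` because `λ̃ - Λ` is diagonal, the right side at most
`‖V⁻¹‖ ‖H‖ ‖V‖ ‖y‖`. A real matrix has no larger operator norm on `ℂⁿ` than on `ℝⁿ`, since it acts
on real and imaginary parts separately.
-/

/-- Spectral (operator 2-) norm of a real square matrix. -/
noncomputable def spNormR {n : ℕ} (A : Matrix (Fin n) (Fin n) ℝ) : ℝ :=
  ‖LinearMap.toContinuousLinearMap (Matrix.toEuclideanLin A)‖

/-- Spectral (operator 2-) norm of a complex square matrix. -/
noncomputable def spNormC {n : ℕ} (A : Matrix (Fin n) (Fin n) ℂ) : ℝ :=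
  ‖LinearMap.toContinuousLinearMap (Matrix.toEuclideanLin A)‖

open scoped Matrix.Norms.L2Operator

theorem EuclideanSpace.norm_sq_eq_norm_sq_re_add_norm_sq_im {n : Type*} [Fintype n]
    (v : n → ℂ) :
    ‖(EuclideanSpace.equiv n ℂ).symm v‖ ^ 2 =
      ‖(EuclideanSpace.equiv n ℝ).symm fun i => (v i).re‖ ^ 2 +
        ‖(EuclideanSpace.equiv n ℝ).symm fun i => (v i).im‖ ^ 2 := by
  simp only [EuclideanSpace.norm_sq_eq, PiLp.continuousLinearEquiv_symm_apply,
    ← Finset.sum_add_distrib]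
  congr 1 with i
  rw [Complex.sq_norm, Complex.normSq_apply, Real.norm_eq_abs, Real.norm_eq_abs, sq_abs, sq_abs,
    sq, sq]

namespace Matrix

variable {ι 𝕜 : Type*} [RCLike 𝕜] [Fintype ι] [DecidableEq ι]

theorem spectrum_mul_mul_nonsing_inv {R : Type*} [Field R] {V : Matrix ι ι R} (hV : IsUnit V)
    (A : Matrix ι ι R) : spectrum R (V * A * V⁻¹) = spectrum R A := by
  obtain ⟨u, rfl⟩ := hV
  rw [← coe_units_inv]
  exact spectrum.units_conjugate

theorem mul_norm_le_norm_diagonal_mulVec {c : ℝ} (hc : 0 ≤ c) {d : ι → 𝕜} (hd : ∀ i, c ≤ ‖d i‖)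
    (x : EuclideanSpace 𝕜 ι) :
    c * ‖x‖ ≤ ‖(EuclideanSpace.equiv ι 𝕜).symm (diagonal d *ᵥ x)‖ := by
  refine (sq_le_sq₀ (by positivity) (norm_nonneg _)).mp ?_
  simp only [mul_pow, EuclideanSpace.norm_sq_eq, Finset.mul_sum,
    PiLp.continuousLinearEquiv_symm_apply, mulVec_diagonal, norm_mul]
  gcongr with i
  exact hd i

theorem exists_ne_zero_diagonal_sub_mulVec_eq {d : ι → 𝕜} {F : Matrix ι ι 𝕜} {μ : 𝕜}
    (hμ : μ ∈ spectrum 𝕜 (diagonal d + F)) :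
    ∃ x ≠ 0, diagonal (fun i => μ - d i) *ᵥ x = F *ᵥ x := by
  rw [spectrum.mem_iff, isUnit_iff_isUnit_det, isUnit_iff_ne_zero, not_not,
    ← exists_mulVec_eq_zero_iff] at hμ
  obtain ⟨x, hx, hμx⟩ := hμ
  refine ⟨x, hx, ?_⟩
  rw [← sub_sub, algebraMap_eq_diagonal, diagonal_sub, sub_mulVec, sub_eq_zero] at hμx
  simpa only [Pi.algebraMap_apply, Algebra.algebraMap_self, RingHom.id_apply] using hμx

theorem exists_norm_sub_le_of_mem_spectrum_diagonal_add {d : ι → 𝕜} {F : Matrix ι ι 𝕜} {μ : 𝕜}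
    (hμ : μ ∈ spectrum 𝕜 (diagonal d + F)) : ∃ i, ‖d i - μ‖ ≤ ‖F‖ := by
  obtain ⟨x, hx, hFx⟩ := exists_ne_zero_diagonal_sub_mulVec_eq hμ
  have : Nonempty ι := by
    by_contra h
    exact hx (funext fun i => (h ⟨i⟩).elim)
  obtain ⟨i, hi⟩ := Finite.exists_min fun i => ‖μ - d i‖
  refine ⟨i, ?_⟩
  set y := (EuclideanSpace.equiv ι 𝕜).symm x
  have hy : 0 < ‖y‖ := by simpa [y] using hx
  have hbound := calc ‖μ - d i‖ * ‖y‖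
      ≤ ‖(EuclideanSpace.equiv ι 𝕜).symm (diagonal (fun i => μ - d i) *ᵥ y)‖ :=
        mul_norm_le_norm_diagonal_mulVec (norm_nonneg _) hi y
    _ = ‖(EuclideanSpace.equiv ι 𝕜).symm (F *ᵥ y)‖ := by rw [show y.ofLp = x from rfl, hFx]
    _ ≤ ‖F‖ * ‖y‖ := l2_opNorm_mulVec F y
  rw [norm_sub_rev]
  exact le_of_mul_le_mul_right hbound hy

theorem exists_norm_sub_le_of_mem_spectrum_add {V : Matrix ι ι 𝕜} (hV : IsUnit V) {d : ι → 𝕜}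
    {E : Matrix ι ι 𝕜} {μ : 𝕜} (hμ : μ ∈ spectrum 𝕜 (V * diagonal d * V⁻¹ + E)) :
    ∃ i, ‖d i - μ‖ ≤ ‖V‖ * ‖V⁻¹‖ * ‖E‖ := by
  have hVdet := (isUnit_iff_isUnit_det V).mp hV
  have hconj : V * diagonal d * V⁻¹ + E = V * (diagonal d + V⁻¹ * E * V) * V⁻¹ := by
    rw [mul_add, add_mul, mul_assoc V⁻¹, mul_nonsing_inv_cancel_left _ _ hVdet,
      mul_nonsing_inv_cancel_right _ _ hVdet]
  rw [hconj, spectrum_mul_mul_nonsing_inv hV] at hμ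
  obtain ⟨i, hi⟩ := exists_norm_sub_le_of_mem_spectrum_diagonal_add hμ
  refine ⟨i, hi.trans ?_⟩
  calc ‖V⁻¹ * E * V‖ ≤ ‖V⁻¹‖ * ‖E‖ * ‖V‖ := by
        grw [l2_opNorm_mul, l2_opNorm_mul]
    _ = ‖V‖ * ‖V⁻¹‖ * ‖E‖ := by ring

theorem l2_opNorm_map_ofReal_le {m n : Type*} [Fintype m] [Fintype n] [DecidableEq n]
    (H : Matrix m n ℝ) : ‖H.map (algebraMap ℝ ℂ)‖ ≤ ‖H‖ := by
  refine ContinuousLinearMap.opNorm_le_bound _ (norm_nonneg _) fun x => ?_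
  change ‖(EuclideanSpace.equiv m ℂ).symm (H.map (algebraMap ℝ ℂ) *ᵥ x)‖ ≤
    ‖H‖ * ‖(EuclideanSpace.equiv n ℂ).symm x‖
  have hre : (fun i => ((H.map (algebraMap ℝ ℂ) *ᵥ x) i).re) = H *ᵥ fun j => (x j).re := by
    ext i
    simp [mulVec, dotProduct, Complex.re_sum]
  have him : (fun i => ((H.map (algebraMap ℝ ℂ) *ᵥ x) i).im) = H *ᵥ fun j => (x j).im := by
    ext i
    simp [mulVec, dotProduct, Complex.im_sum]
  refine (sq_le_sq₀ (norm_nonneg _) (by positivity)).mp ?_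
  rw [EuclideanSpace.norm_sq_eq_norm_sq_re_add_norm_sq_im, hre, him]
  calc _ ≤ (‖H‖ * ‖(EuclideanSpace.equiv n ℝ).symm fun i => (x i).re‖) ^ 2 +
        (‖H‖ * ‖(EuclideanSpace.equiv n ℝ).symm fun i => (x i).im‖) ^ 2 := by
        gcongr
        · exact l2_opNorm_mulVec H ((EuclideanSpace.equiv n ℝ).symm fun i => (x i).re)
        · exact l2_opNorm_mulVec H ((EuclideanSpace.equiv n ℝ).symm fun i => (x i).im)
    _ = ‖H‖ ^ 2 * ‖(EuclideanSpace.equiv n ℂ).symm x‖ ^ 2 := by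
        rw [EuclideanSpace.norm_sq_eq_norm_sq_re_add_norm_sq_im (x : n → ℂ)]
        ring
    _ = (‖H‖ * ‖(EuclideanSpace.equiv n ℂ).symm x‖) ^ 2 := (mul_pow _ _ _).symm

end Matrix

/-- **Bauer–Fike theorem.** If `A` is diagonalizable, `A = V Λ V⁻¹` with `V`
invertible and `Λ` diagonal, then every eigenvalue `λ̃` of `A + H` is within
`‖V‖ ‖V⁻¹‖ ‖H‖` of some eigenvalue `λ` of `A`. -/
theorem bauer_fike {n : ℕ} (A H : Matrix (Fin n) (Fin n) ℝ)
    (V : Matrix (Fin n) (Fin n) ℂ) (Λ : Matrix (Fin n) (Fin n) ℂ)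
    (hV : IsUnit V) (hΛ : Λ.IsDiag)
    (hdiag : A.map (algebraMap ℝ ℂ) = V * Λ * V⁻¹)
    (lam' : ℂ) (hlam' : lam' ∈ spectrum ℂ ((A + H).map (algebraMap ℝ ℂ))) :
    ∃ lam ∈ spectrum ℂ (A.map (algebraMap ℝ ℂ)),
      ‖lam - lam'‖ ≤ spNormC V * spNormC V⁻¹ * spNormR H := by
  rw [← hΛ.diagonal_diag] at hdiag
  rw [Matrix.map_add _ (map_add _), hdiag] at hlam'
  obtain ⟨i, hi⟩ := exists_norm_sub_le_of_mem_spectrum_add hV hlam'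
  refine ⟨Λ.diag i, ?_, hi.trans ?_⟩
  · rw [hdiag, spectrum_mul_mul_nonsing_inv hV, spectrum_diagonal]
    exact Set.mem_range_self i
  -- `spNormC` and `spNormR` unfold to the L2 operator norm.
  · exact mul_le_mul_of_nonneg_left (l2_opNorm_map_ofReal_le H) (by positivity)
end

section
/- If A is a symmetric real n×n matrix and H is any real n×n matrix, then for any eigenvalue λ̃ of A + H there exists an eigenvalue λ of A such that |λ - λ̃| ≤ ‖H‖, where ‖·‖ is the spectral norm. -/
/-!
An eigenvector `v` of `A + H` for `λ̃` satisfies `(A - λ̃) v = -H v`. Expanding `v` in an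
orthonormal eigenbasis of the symmetric matrix `A` gives `‖(A - λ̃) v‖ ≥ min_λ |λ - λ̃| ‖v‖`,
while `‖H v‖ ≤ ‖H‖ ‖v‖`. Since `v` is complex, the last bound is obtained by letting the real
matrix `H` act separately on the real and imaginary parts of `v`.
-/

open Matrix WithLp Module.End

namespace LinearMap.IsSymmetric

variable {𝕜 E : Type*} [RCLike 𝕜] [NormedAddCommGroup E] [InnerProductSpace 𝕜 E]
  [FiniteDimensional 𝕜 E] {T : E →ₗ[𝕜] E}

theorem mul_norm_le_norm_apply_sub_smul (hT : T.IsSymmetric) {n : ℕ}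
    (hn : Module.finrank 𝕜 E = n) {z : 𝕜} {d : ℝ} (hd : 0 ≤ d)
    (hdist : ∀ i, d ≤ ‖(hT.eigenvalues hn i : 𝕜) - z‖) (v : E) :
    d * ‖v‖ ≤ ‖T v - z • v‖ := by
  set b := hT.eigenvectorBasis hn
  have hcoord (i : Fin n) :
      b.repr (T v - z • v) i = ((hT.eigenvalues hn i : 𝕜) - z) * b.repr v i := by
    simp [b, map_sub, hT.eigenvectorBasis_apply_self_apply, sub_mul]
  refine le_of_sq_le_sq ?_ (norm_nonneg _)
  rw [← b.repr.norm_map v, ← b.repr.norm_map, mul_pow, EuclideanSpace.norm_sq_eq,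
    EuclideanSpace.norm_sq_eq, Finset.mul_sum]
  gcongr with i
  rw [hcoord, norm_mul, mul_pow]
  gcongr
  exact hdist i

theorem exists_hasEigenvalue_mul_norm_le (hT : T.IsSymmetric) (z : 𝕜) {v : E} (hv : v ≠ 0) :
    ∃ μ : ℝ, HasEigenvalue T μ ∧ ‖(μ : 𝕜) - z‖ * ‖v‖ ≤ ‖T v - z • v‖ := by
  have : Nontrivial E := ⟨v, 0, hv⟩
  have : Nonempty (Fin (Module.finrank 𝕜 E)) := ⟨⟨0, Module.finrank_pos⟩⟩
  obtain ⟨i, -, hmin⟩ := Finset.exists_min_image Finset.univ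
    (fun i => ‖(hT.eigenvalues rfl i : 𝕜) - z‖) Finset.univ_nonempty
  exact ⟨_, hT.hasEigenvalue_eigenvalues rfl i, hT.mul_norm_le_norm_apply_sub_smul rfl
    (norm_nonneg _) (fun j => hmin j (Finset.mem_univ j)) v⟩

end LinearMap.IsSymmetric

namespace EuclideanSpace

variable {ι : Type*} [Fintype ι]

theorem norm_sq_eq_norm_re_sq_add_norm_im_sq (x : EuclideanSpace ℂ ι) :
    ‖x‖ ^ 2 = ‖toLp 2 fun i => (x i).re‖ ^ 2 + ‖toLp 2 fun i => (x i).im‖ ^ 2 := by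
  rw [EuclideanSpace.norm_sq_eq, EuclideanSpace.norm_sq_eq, EuclideanSpace.norm_sq_eq,
    ← Finset.sum_add_distrib]
  refine Finset.sum_congr rfl fun i _ => ?_
  rw [Complex.sq_norm, Complex.normSq_apply, Real.norm_eq_abs, Real.norm_eq_abs, sq_abs, sq_abs,
    sq, sq]

end EuclideanSpace

namespace Matrix

variable {m n : Type*} [Fintype n] [DecidableEq n]

theorem re_toEuclideanLin_map_ofReal (H : Matrix m n ℝ) (x : EuclideanSpace ℂ n) :
    (toLp 2 fun i => (toEuclideanLin (H.map (algebraMap ℝ ℂ)) x i).re) =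
      toEuclideanLin H (toLp 2 fun j => (x j).re) := by
  ext i
  simp [toLpLin_apply, mulVec, dotProduct, Complex.re_sum]

theorem im_toEuclideanLin_map_ofReal (H : Matrix m n ℝ) (x : EuclideanSpace ℂ n) :
    (toLp 2 fun i => (toEuclideanLin (H.map (algebraMap ℝ ℂ)) x i).im) =
      toEuclideanLin H (toLp 2 fun j => (x j).im) := by
  ext i
  simp [toLpLin_apply, mulVec, dotProduct, Complex.im_sum]

theorem norm_toEuclideanLin_map_ofReal_le [Fintype m] (H : Matrix m n ℝ) {C : ℝ} (hC : 0 ≤ C)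
    (hH : ∀ p, ‖toEuclideanLin H p‖ ≤ C * ‖p‖) (x : EuclideanSpace ℂ n) :
    ‖toEuclideanLin (H.map (algebraMap ℝ ℂ)) x‖ ≤ C * ‖x‖ := by
  refine le_of_sq_le_sq ?_ (by positivity)
  rw [mul_pow, EuclideanSpace.norm_sq_eq_norm_re_sq_add_norm_im_sq x,
    EuclideanSpace.norm_sq_eq_norm_re_sq_add_norm_im_sq, re_toEuclideanLin_map_ofReal,
    im_toEuclideanLin_map_ofReal, mul_add, ← mul_pow, ← mul_pow]
  gcongr <;> exact hH _

end Matrix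

/-- **Bauer–Fike theorem, symmetric case.** If `A` is a real symmetric matrix and
`H` is any real matrix, then every eigenvalue `λ̃` of `A + H` is within `‖H‖`
of some eigenvalue `λ` of `A`. -/
theorem bauer_fike_symmetric {n : ℕ} (A H : Matrix (Fin n) (Fin n) ℝ)
    (hA : A.IsSymm)
    (lam' : ℂ) (hlam' : lam' ∈ spectrum ℂ ((A + H).map (algebraMap ℝ ℂ))) :
    ∃ lam ∈ spectrum ℂ (A.map (algebraMap ℝ ℂ)), ‖lam - lam'‖ ≤ spNormR H := by
  set T := toEuclideanLin (A.map (algebraMap ℝ ℂ))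
  set S := toEuclideanLin (H.map (algebraMap ℝ ℂ))
  have hT : T.IsSymmetric := isSymmetric_toEuclideanLin_iff.2 <|
    (isHermitian_iff_isSymm.2 hA).map _ fun x => (Complex.conj_ofReal x).symm
  rw [Matrix.map_add _ (map_add _), ← spectrum_toLpLin 2, map_add,
    ← hasEigenvalue_iff_mem_spectrum] at hlam'
  obtain ⟨v, hv⟩ := hlam'.exists_hasEigenvector
  have hTv : T v - lam' • v = -S v := by
    rw [← hv.apply_eq_smul, LinearMap.add_apply]
    abel
  obtain ⟨μ, hμ, hdist⟩ := hT.exists_hasEigenvalue_mul_norm_le lam' hv.2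
  refine ⟨μ, spectrum_toLpLin (A := A.map (algebraMap ℝ ℂ)) 2 ▸ hμ.mem_spectrum,
    le_of_mul_le_mul_right ?_ (norm_pos_iff.2 hv.2)⟩
  calc ‖(μ : ℂ) - lam'‖ * ‖v‖ ≤ ‖S v‖ := by rwa [hTv, norm_neg] at hdist
    _ ≤ spNormR H * ‖v‖ := H.norm_toEuclideanLin_map_ofReal_le (norm_nonneg _)
        (LinearMap.toContinuousLinearMap _).le_opNorm v
end

section
/- Let M⋆ = u⋆ u⋆ᵀ be a rank-1 real symmetric n×n matrix with ‖u⋆‖₂ = 1, and let H be a real n×n matrix with ‖H‖ ≤ 1/4. Let (λ, u) be the leading eigenpair of M = M⋆ + H with λ real, λ ≥ 3/4, and ‖u‖₂ = 1. Then ‖u − ((u⋆ᵀu)/λ) u⋆‖₂ ≤ ‖H‖ / (λ(λ − ‖H‖)) ≤ (8/3)‖H‖. -/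
open Matrix

/-- Euclidean (ℓ₂) norm of a real vector. -/
noncomputable def l2norm {n : ℕ} (x : Fin n → ℝ) : ℝ :=
  Real.sqrt (∑ i, x i ^ 2)

/-!
The eigen-equation `λ u = (u⋆ᵀu) u⋆ + H u` says that the residual `u − ((u⋆ᵀu)/λ) u⋆` is exactly
`H u / λ`, of norm at most `‖H‖/λ`. Taking norms in the same equation gives `λ ≤ 1 + ‖H‖`, i.e.
`λ − ‖H‖ ≤ 1`, so `‖H‖/λ ≤ ‖H‖/(λ(λ − ‖H‖))`; finally `λ ≥ 3/4` and `λ − ‖H‖ ≥ 1/2` give the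
factor `8/3`.
-/

section l2norm

variable {n : ℕ}

lemma l2norm_eq_norm_toLp (x : Fin n → ℝ) : l2norm x = ‖WithLp.toLp 2 x‖ := by
  simp [EuclideanSpace.norm_eq, l2norm]

lemma l2norm_smul (c : ℝ) (x : Fin n → ℝ) : l2norm (c • x) = |c| * l2norm x := by
  rw [l2norm_eq_norm_toLp, l2norm_eq_norm_toLp, WithLp.toLp_smul, norm_smul, Real.norm_eq_abs]

lemma l2norm_add_le (x y : Fin n → ℝ) : l2norm (x + y) ≤ l2norm x + l2norm y := by
  simpa only [l2norm_eq_norm_toLp, WithLp.toLp_add] using norm_add_le _ _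

lemma abs_dotProduct_le_l2norm_mul (x y : Fin n → ℝ) : |x ⬝ᵥ y| ≤ l2norm x * l2norm y := by
  have h : x ⬝ᵥ y = inner ℝ (WithLp.toLp 2 x) (WithLp.toLp 2 y) := by
    simp [dotProduct, PiLp.inner_apply, mul_comm]
  rw [h, l2norm_eq_norm_toLp, l2norm_eq_norm_toLp]
  exact abs_real_inner_le_norm _ _

lemma spNormR_nonneg (A : Matrix (Fin n) (Fin n) ℝ) : 0 ≤ spNormR A :=
  norm_nonneg _

lemma l2norm_mulVec_le (A : Matrix (Fin n) (Fin n) ℝ) (x : Fin n → ℝ) :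
    l2norm (A *ᵥ x) ≤ spNormR A * l2norm x := by
  rw [l2norm_eq_norm_toLp, l2norm_eq_norm_toLp]
  exact (LinearMap.toContinuousLinearMap (Matrix.toEuclideanLin A)).le_opNorm (WithLp.toLp 2 x)

end l2norm

lemma sub_smul_eq_inv_smul_mulVec_of_eigen {K ι : Type*} [Field K] [Fintype ι]
    {a u : ι → K} {H : Matrix ι ι K} {lam : K}
    (heig : (vecMulVec a a + H) *ᵥ u = lam • u) (hlam : lam ≠ 0) :
    u - ((a ⬝ᵥ u) / lam) • a = lam⁻¹ • (H *ᵥ u) := by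
  rw [add_mulVec, vecMulVec_mulVec, op_smul_eq_smul] at heig
  rw [← sub_eq_iff_eq_add'.mpr heig.symm, smul_sub, smul_smul, inv_mul_cancel₀ hlam, one_smul,
    smul_smul, inv_mul_eq_div]

lemma abs_le_one_add_spNormR_of_eigen {n : ℕ} {a u : Fin n → ℝ} {H : Matrix (Fin n) (Fin n) ℝ}
    {lam : ℝ} (ha : l2norm a = 1) (hu : l2norm u = 1)
    (heig : (vecMulVec a a + H) *ᵥ u = lam • u) :
    |lam| ≤ 1 + spNormR H := by
  rw [add_mulVec, vecMulVec_mulVec, op_smul_eq_smul] at heig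
  have hdot : |a ⬝ᵥ u| ≤ 1 := by simpa [ha, hu] using abs_dotProduct_le_l2norm_mul a u
  have hHu : l2norm (H *ᵥ u) ≤ spNormR H := by simpa [hu] using l2norm_mulVec_le H u
  calc |lam| = l2norm (lam • u) := by rw [l2norm_smul, hu, mul_one]
    _ ≤ |a ⬝ᵥ u| * l2norm a + l2norm (H *ᵥ u) := by
        rw [← heig, ← l2norm_smul]; exact l2norm_add_le _ _
    _ ≤ 1 + spNormR H := by rw [ha, mul_one]; exact add_le_add hdot hHu

lemma div_mul_sub_le_eight_thirds_mul {h lam : ℝ} (h0 : 0 ≤ h) (h4 : h ≤ 1 / 4)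
    (hlam : 3 / 4 ≤ lam) : h / (lam * (lam - h)) ≤ 8 / 3 * h := by
  calc h / (lam * (lam - h)) ≤ h / (3 / 8) := by
        gcongr; nlinarith
    _ = 8 / 3 * h := by ring

/-- Rank-1 ℓ₂ eigenvector perturbation: if `M = u⋆u⋆ᵀ + H` with `‖H‖ ≤ 1/4` and
`(λ, u)` is the leading eigenpair with `λ ≥ 3/4` and `‖u‖₂ = 1`, then
`‖u − ((u⋆ᵀu)/λ) u⋆‖₂ ≤ ‖H‖/(λ(λ−‖H‖)) ≤ (8/3)‖H‖`. -/
theorem rank_one_l2_perturbation {n : ℕ} (ustar : Fin n → ℝ)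
    (hustar : l2norm ustar = 1)
    (H : Matrix (Fin n) (Fin n) ℝ) (hH : spNormR H ≤ 1 / 4)
    (M : Matrix (Fin n) (Fin n) ℝ) (hM : M = Matrix.vecMulVec ustar ustar + H)
    (lam : ℝ) (u : Fin n → ℝ) (hu : l2norm u = 1)
    (heig : M.mulVec u = lam • u) (hlam : 3 / 4 ≤ lam) :
    l2norm (u - ((ustar ⬝ᵥ u) / lam) • ustar) ≤ spNormR H / (lam * (lam - spNormR H)) ∧
    spNormR H / (lam * (lam - spNormR H)) ≤ (8 / 3) * spNormR H := by
  subst hM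
  have hlam0 : 0 < lam := by linarith
  have hH0 := spNormR_nonneg H
  have hlam_le : lam ≤ 1 + spNormR H :=
    (le_abs_self lam).trans (abs_le_one_add_spNormR_of_eigen hustar hu heig)
  refine ⟨?_, div_mul_sub_le_eight_thirds_mul hH0 hH hlam⟩
  calc l2norm (u - ((ustar ⬝ᵥ u) / lam) • ustar) = lam⁻¹ * l2norm (H *ᵥ u) := by
        rw [sub_smul_eq_inv_smul_mulVec_of_eigen heig hlam0.ne', l2norm_smul, abs_inv,
          abs_of_pos hlam0]
    _ ≤ lam⁻¹ * spNormR H := by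
        gcongr; simpa [hu] using l2norm_mulVec_le H u
    _ = spNormR H / (lam * 1) := by ring
    _ ≤ spNormR H / (lam * (lam - spNormR H)) := by
        gcongr
        · exact mul_pos hlam0 (by linarith)
        · linarith
end
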